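/- Let (Ω, F, P) and (I, 𝓘, λ) be probability spaces, let W be a σ-algebra on Ω × I containing the product σ-algebra F ⊗ 𝓘, and let Q be a probability measure on (Ω × I, W) that is a Fubini extension of (Ω × I, F ⊗ 𝓘, P ⊗ λ): for every Q-integrable real-valued f on Ω × I, the section f^u(·) = f(·,u) is P-integrable for λ-a.e. u, the section f_ω(·) = f(ω,·) is λ-integrable for P-a.e. ω, the functions u ↦ ∫_Ω f^u dP and ω ↦ ∫_I f_ω dλ are integrable, and ∫_{Ω×I} f dQ = ∫_I (∫_Ω f^u dP) dλ = ∫_Ω (∫_I f_ω dλ) dP. Let X : Ω × I → ℝ be W-measurable and square-integrable with respect to Q. Then the following are equivalent: (1) X is essentially pairwise uncorrelated, i.e. for λ-a.e. u ∈ I the random variable X^u is square-integrable under P, and for λ-a.e. u and λ-a.e. v the random variables X^u, X^v are uncorrelated (E[X^u X^v] = E[X^u] E[X^v]); (2) for every A ∈ 𝓘 with λ(A) > 0, one has ∫_A X^u(ω) λ(du) = ∫_A E[X^u] λ(du) for P-a.e. ω ∈ Ω. -/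

import Mathlib

open MeasureTheory

noncomputable section

/-- `(Ω × I, W, Q)` is a Fubini extension of the product probability space
`(Ω × I, F ⊗ 𝓘, P ⊗ λ)`: `W` contains the product σ-algebra, and every `Q`-integrable
real-valued function has `λ`-a.e. `P`-integrable sections and `P`-a.e. `λ`-integrable
sections, the iterated integrals being integrable and both equal to the `Q`-integral. -/
def IsFubiniExtension {Ω I : Type*} (mΩ : MeasurableSpace Ω) (mI : MeasurableSpace I)
    (P : @Measure Ω mΩ) (lam : @Measure I mI)
    (W : MeasurableSpace (Ω × I)) (Q : @Measure (Ω × I) W) : Prop :=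
  mΩ.prod mI ≤ W ∧
  ∀ f : Ω × I → ℝ, Integrable f Q →
    (∀ᵐ u ∂lam, Integrable (fun ω => f (ω, u)) P) ∧
    (∀ᵐ ω ∂P, Integrable (fun u => f (ω, u)) lam) ∧
    Integrable (fun u => ∫ ω, f (ω, u) ∂P) lam ∧
    Integrable (fun ω => ∫ u, f (ω, u) ∂lam) P ∧
    (∫ p, f p ∂Q = ∫ u, (∫ ω, f (ω, u) ∂P) ∂lam) ∧
    (∫ p, f p ∂Q = ∫ ω, (∫ u, f (ω, u) ∂lam) ∂P)

open ProbabilityTheory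

/-!
Write `h_A(ω) = ∫_A X(ω, u) λ(du)` and `c = ∫_A E[X^u] λ(du)`. Fubini for `Q` (applied to
`1_A(u) φ(ω) X(ω, u)`) gives `E[φ h_A] = ∫_A E[φ X^u] λ(du)` for every `φ ∈ L²(P)`.
With `φ = 1` this is `E[h_A] = c`; with `φ = h_A` and then `φ = X^u`, pairwise
uncorrelatedness gives `E[h_A²] = c²`. So `h_A` has variance zero and equals `c` almost surely.
Conversely, if every `h_B` is a.s. constant, then `φ = X^u` shows that `v ↦ E[X^u X^v]` and
`v ↦ E[X^u] E[X^v]` have the same integral over every measurable `B`, hence agree a.e.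
-/

lemma sq_integral_le_integral_sq {α : Type*} [MeasurableSpace α] {μ : Measure α}
    [IsProbabilityMeasure μ] {f : α → ℝ} (hf : MemLp f 2 μ) :
    (∫ x, f x ∂μ) ^ 2 ≤ ∫ x, f x ^ 2 ∂μ := by
  have hvar := variance_nonneg f μ
  rw [variance_eq_sub hf] at hvar
  simpa [sub_nonneg] using hvar

lemma integral_indicator_preimage_snd {Ω I : Type*} [MeasurableSpace I] {lam : Measure I}
    (f : Ω × I → ℝ) (ω : Ω) {B : Set I} (hB : MeasurableSet B) :
    ∫ u, (Prod.snd ⁻¹' B).indicator f (ω, u) ∂lam = ∫ u in B, f (ω, u) ∂lam := by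
  rw [← integral_indicator hB]
  rfl

namespace IsFubiniExtension

variable {Ω I : Type*} [mΩ : MeasurableSpace Ω] [mI : MeasurableSpace I]
  {P : Measure Ω} {lam : Measure I} {W : MeasurableSpace (Ω × I)} {Q : @Measure (Ω × I) W}
  {f X : Ω × I → ℝ}

lemma measurable_fst (hFub : IsFubiniExtension mΩ mI P lam W Q) :
    @Measurable _ _ W mΩ Prod.fst :=
  _root_.measurable_fst.mono hFub.1 le_rfl

lemma measurable_snd (hFub : IsFubiniExtension mΩ mI P lam W Q) :
    @Measurable _ _ W mI Prod.snd :=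
  _root_.measurable_snd.mono hFub.1 le_rfl

lemma prod_left_ae (hFub : IsFubiniExtension mΩ mI P lam W Q) (hf : Integrable f Q) :
    ∀ᵐ u ∂lam, Integrable (fun ω => f (ω, u)) P :=
  (hFub.2 f hf).1

lemma prod_right_ae (hFub : IsFubiniExtension mΩ mI P lam W Q) (hf : Integrable f Q) :
    ∀ᵐ ω ∂P, Integrable (fun u => f (ω, u)) lam :=
  (hFub.2 f hf).2.1

lemma integral_prod_right (hFub : IsFubiniExtension mΩ mI P lam W Q) (hf : Integrable f Q) :
    Integrable (fun u => ∫ ω, f (ω, u) ∂P) lam :=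
  (hFub.2 f hf).2.2.1

lemma integral_prod_left (hFub : IsFubiniExtension mΩ mI P lam W Q) (hf : Integrable f Q) :
    Integrable (fun ω => ∫ u, f (ω, u) ∂lam) P :=
  (hFub.2 f hf).2.2.2.1

lemma integral_eq_symm (hFub : IsFubiniExtension mΩ mI P lam W Q) (hf : Integrable f Q) :
    ∫ p, f p ∂Q = ∫ u, ∫ ω, f (ω, u) ∂P ∂lam :=
  (hFub.2 f hf).2.2.2.2.1

lemma integral_eq (hFub : IsFubiniExtension mΩ mI P lam W Q) (hf : Integrable f Q) :
    ∫ p, f p ∂Q = ∫ ω, ∫ u, f (ω, u) ∂lam ∂P :=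
  (hFub.2 f hf).2.2.2.2.2

lemma integral_integral_swap (hFub : IsFubiniExtension mΩ mI P lam W Q)
    (hf : Integrable f Q) : ∫ u, ∫ ω, f (ω, u) ∂P ∂lam = ∫ ω, ∫ u, f (ω, u) ∂lam ∂P :=
  (hFub.integral_eq_symm hf).symm.trans (hFub.integral_eq hf)

lemma measurePreserving_fst (hFub : IsFubiniExtension mΩ mI P lam W Q) [IsFiniteMeasure P]
    [IsProbabilityMeasure lam] [IsFiniteMeasure Q] :
    @MeasurePreserving _ _ W mΩ Prod.fst Q P := by
  refine ⟨hFub.measurable_fst, Measure.ext fun s hs => ?_⟩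
  have hs' := hFub.measurable_fst hs
  have h := hFub.integral_eq_symm ((integrable_const (1 : ℝ)).indicator hs')
  have hsection : ∀ u : I, (fun ω => (Prod.fst ⁻¹' s).indicator (fun _ => (1 : ℝ)) (ω, u))
      = s.indicator fun _ => 1 := fun _ => rfl
  simp only [hsection, integral_indicator_const _ hs', integral_indicator_const _ hs,
    integral_const, probReal_univ, smul_eq_mul, mul_one, one_mul] at h
  rw [Measure.map_apply hFub.measurable_fst hs]
  exact (measureReal_eq_measureReal_iff).mp h

lemma setIntegral_integral_swap (hFub : IsFubiniExtension mΩ mI P lam W Q)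
    (hf : Integrable f Q) {B : Set I} (hB : MeasurableSet B) :
    ∫ u in B, ∫ ω, f (ω, u) ∂P ∂lam = ∫ ω, ∫ u in B, f (ω, u) ∂lam ∂P := by
  have h := hFub.integral_integral_swap (hf.indicator (hFub.measurable_snd hB))
  have hsection : ∀ u, ∫ ω, (Prod.snd ⁻¹' B).indicator f (ω, u) ∂P
      = B.indicator (fun u => ∫ ω, f (ω, u) ∂P) u := by
    intro u
    by_cases hu : u ∈ B <;> simp [hu]
  simpa only [hsection, integral_indicator hB, integral_indicator_preimage_snd _ _ hB] using h

lemma integrable_mul_fst [IsFiniteMeasure P] [IsProbabilityMeasure lam] [IsFiniteMeasure Q]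
    (hFub : IsFubiniExtension mΩ mI P lam W Q) {φ : Ω → ℝ}
    (hφ : MemLp φ 2 P) (hX : MemLp X 2 Q) : Integrable (fun p => φ p.1 * X p) Q :=
  (hφ.comp_measurePreserving hFub.measurePreserving_fst).integrable_mul hX

lemma setIntegral_integral_mul_fst [IsFiniteMeasure P] [IsProbabilityMeasure lam]
    [IsFiniteMeasure Q] (hFub : IsFubiniExtension mΩ mI P lam W Q) {φ : Ω → ℝ}
    (hφ : MemLp φ 2 P) (hX : MemLp X 2 Q) {B : Set I} (hB : MeasurableSet B) :
    ∫ u in B, ∫ ω, φ ω * X (ω, u) ∂P ∂lam = ∫ ω, φ ω * ∫ u in B, X (ω, u) ∂lam ∂P := by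
  simp only [hFub.setIntegral_integral_swap (hFub.integrable_mul_fst hφ hX) hB,
    integral_const_mul]

lemma memLp_integral_prod_left [IsProbabilityMeasure lam] [IsFiniteMeasure Q]
    (hFub : IsFubiniExtension mΩ mI P lam W Q) (hf : MemLp f 2 Q) :
    MemLp (fun ω => ∫ u, f (ω, u) ∂lam) 2 P := by
  have hf1 := hf.integrable one_le_two
  have hf2 := hf.integrable_sq
  have hmeas := (hFub.integral_prod_left hf1).aestronglyMeasurable
  refine (memLp_two_iff_integrable_sq hmeas).2 <|
    (hFub.integral_prod_left hf2).mono' (hmeas.pow 2) ?_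
  filter_upwards [hFub.prod_right_ae hf1, hFub.prod_right_ae hf2] with ω h1 h2
  rw [Real.norm_of_nonneg (sq_nonneg _)]
  exact sq_integral_le_integral_sq ((memLp_two_iff_integrable_sq h1.aestronglyMeasurable).2 h2)

lemma memLp_setIntegral [IsProbabilityMeasure lam] [IsFiniteMeasure Q]
    (hFub : IsFubiniExtension mΩ mI P lam W Q) (hX : MemLp X 2 Q) {B : Set I}
    (hB : MeasurableSet B) : MemLp (fun ω => ∫ u in B, X (ω, u) ∂lam) 2 P := by
  simpa only [integral_indicator_preimage_snd _ _ hB] using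
    hFub.memLp_integral_prod_left (hX.indicator (hFub.measurable_snd hB))

lemma ae_memLp_section [IsFiniteMeasure Q] (hFub : IsFubiniExtension mΩ mI P lam W Q)
    (hX : MemLp X 2 Q) :
    ∀ᵐ u ∂lam, MemLp (fun ω => X (ω, u)) 2 P := by
  filter_upwards [hFub.prod_left_ae (hX.integrable one_le_two),
    hFub.prod_left_ae hX.integrable_sq] with u h1 h2
  exact (memLp_two_iff_integrable_sq h1.aestronglyMeasurable).2 h2

theorem ae_setIntegral_eq_of_uncorrelated [IsProbabilityMeasure P] [IsProbabilityMeasure lam]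
    [IsFiniteMeasure Q] (hFub : IsFubiniExtension mΩ mI P lam W Q) (hX : MemLp X 2 Q)
    (hunc : ∀ᵐ u ∂lam, ∀ᵐ v ∂lam,
      ∫ ω, X (ω, u) * X (ω, v) ∂P = (∫ ω, X (ω, u) ∂P) * (∫ ω, X (ω, v) ∂P))
    {A : Set I} (hA : MeasurableSet A) :
    ∀ᵐ ω ∂P, ∫ u in A, X (ω, u) ∂lam = ∫ u in A, (∫ ω', X (ω', u) ∂P) ∂lam := by
  set h := fun ω => ∫ u in A, X (ω, u) ∂lam
  set c := ∫ u in A, (∫ ω', X (ω', u) ∂P) ∂lam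
  have hh : MemLp h 2 P := hFub.memLp_setIntegral hX hA
  have hmean : ∫ ω, h ω ∂P = c :=
    (hFub.setIntegral_integral_swap (hX.integrable one_le_two) hA).symm
  have hcorr : ∀ᵐ u ∂lam, ∫ ω, h ω * X (ω, u) ∂P = (∫ ω, X (ω, u) ∂P) * c := by
    filter_upwards [hFub.ae_memLp_section hX, hunc] with u hu hunc_u
    calc ∫ ω, h ω * X (ω, u) ∂P = ∫ ω, X (ω, u) * h ω ∂P := by simp_rw [mul_comm]
      _ = ∫ v in A, ∫ ω, X (ω, u) * X (ω, v) ∂P ∂lam :=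
        (hFub.setIntegral_integral_mul_fst hu hX hA).symm
      _ = ∫ v in A, (∫ ω, X (ω, u) ∂P) * ∫ ω, X (ω, v) ∂P ∂lam :=
        integral_congr_ae (ae_restrict_of_ae hunc_u)
      _ = (∫ ω, X (ω, u) ∂P) * c := integral_const_mul _ _
  have hsq : ∫ ω, h ω ^ 2 ∂P = c ^ 2 :=
    calc ∫ ω, h ω ^ 2 ∂P = ∫ u in A, ∫ ω, h ω * X (ω, u) ∂P ∂lam := by
          simp_rw [sq]
          exact (hFub.setIntegral_integral_mul_fst hh hX hA).symm
      _ = ∫ u in A, (∫ ω, X (ω, u) ∂P) * c ∂lam := integral_congr_ae (ae_restrict_of_ae hcorr)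
      _ = c ^ 2 := by rw [integral_mul_const, sq]
  have hvar : Var[h; P] = 0 := by
    rw [variance_eq_sub hh, Pi.pow_def, hsq, hmean, sub_self]
  filter_upwards [ae_eq_integral_of_variance_eq_zero hh hvar] with ω hω
  exact hω.trans hmean

theorem uncorrelated_of_ae_setIntegral_eq [IsProbabilityMeasure P] [IsProbabilityMeasure lam]
    [IsFiniteMeasure Q] (hFub : IsFubiniExtension mΩ mI P lam W Q) (hX : MemLp X 2 Q)
    (hconst : ∀ B, MeasurableSet B →
      ∀ᵐ ω ∂P, ∫ u in B, X (ω, u) ∂lam = ∫ u in B, (∫ ω', X (ω', u) ∂P) ∂lam) :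
    ∀ᵐ u ∂lam, ∀ᵐ v ∂lam,
      ∫ ω, X (ω, u) * X (ω, v) ∂P = (∫ ω, X (ω, u) ∂P) * (∫ ω, X (ω, v) ∂P) := by
  filter_upwards [hFub.ae_memLp_section hX] with u hu
  refine Integrable.ae_eq_of_forall_setIntegral_eq _ _
    (hFub.integral_prod_right (hFub.integrable_mul_fst hu hX))
    ((hFub.integral_prod_right (hX.integrable one_le_two)).const_mul _) fun B hB _ => ?_
  calc ∫ v in B, ∫ ω, X (ω, u) * X (ω, v) ∂P ∂lam
      = ∫ ω, X (ω, u) * ∫ v in B, X (ω, v) ∂lam ∂P := hFub.setIntegral_integral_mul_fst hu hX hB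
    _ = ∫ ω, X (ω, u) * ∫ v in B, (∫ ω', X (ω', v) ∂P) ∂lam ∂P :=
      integral_congr_ae ((hconst B hB).mono fun ω hω => congrArg (X (ω, u) * ·) hω)
    _ = ∫ v in B, (∫ ω, X (ω, u) ∂P) * ∫ ω', X (ω', v) ∂P ∂lam := by
      rw [integral_mul_const, integral_const_mul]

end IsFubiniExtension

theorem exact_law_of_large_numbers_general
    {Ω I : Type*} [mΩ : MeasurableSpace Ω] [mI : MeasurableSpace I]
    (P : Measure Ω) [IsProbabilityMeasure P]
    (lam : Measure I) [IsProbabilityMeasure lam]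
    (W : MeasurableSpace (Ω × I)) (Q : @Measure (Ω × I) W) [IsProbabilityMeasure Q]
    (hFub : IsFubiniExtension mΩ mI P lam W Q)
    (X : Ω × I → ℝ)
    (hX2 : MemLp X 2 Q) :
    ((∀ᵐ u ∂lam, MemLp (fun ω => X (ω, u)) 2 P) ∧
      (∀ᵐ u ∂lam, ∀ᵐ v ∂lam,
        ∫ ω, X (ω, u) * X (ω, v) ∂P
          = (∫ ω, X (ω, u) ∂P) * (∫ ω, X (ω, v) ∂P)))
    ↔
    (∀ A : Set I, MeasurableSet A → 0 < lam A →
      ∀ᵐ ω ∂P,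
        ∫ u in A, X (ω, u) ∂lam = ∫ u in A, (∫ ω', X (ω', u) ∂P) ∂lam) := by
  refine ⟨fun ⟨_, hunc⟩ A hA _ => hFub.ae_setIntegral_eq_of_uncorrelated hX2 hunc hA,
    fun h => ⟨hFub.ae_memLp_section hX2, hFub.uncorrelated_of_ae_setIntegral_eq hX2 ?_⟩⟩
  intro B hB
  rcases eq_zero_or_pos (lam B) with hB0 | hBpos
  · simp [Measure.restrict_eq_zero.mpr hB0]
  · exact h B hB hBpos

/-- exact law of large numbers. Let `(Ω × I, W, Q)` be a Fubini
extension of `(Ω × I, F ⊗ 𝓘, P ⊗ λ)` and let `X : Ω × I → ℝ` be `W`-measurable and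
square-integrable w.r.t. `Q`. Then `X` is essentially pairwise uncorrelated iff for every
`A ∈ 𝓘` with `λ(A) > 0`, `∫_A X^u(ω) λ(du) = ∫_A E[X^u] λ(du)` for `P`-a.e. `ω`. -/
theorem exact_law_of_large_numbers
    {Ω I : Type*} [mΩ : MeasurableSpace Ω] [mI : MeasurableSpace I]
    (P : Measure Ω) [IsProbabilityMeasure P]
    (lam : Measure I) [IsProbabilityMeasure lam]
    (W : MeasurableSpace (Ω × I)) (Q : @Measure (Ω × I) W) [IsProbabilityMeasure Q]
    (hFub : IsFubiniExtension mΩ mI P lam W Q)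
    (X : Ω × I → ℝ) (hXmeas : @Measurable (Ω × I) ℝ W _ X)
    (hX2 : MemLp X 2 Q) :
    ((∀ᵐ u ∂lam, MemLp (fun ω => X (ω, u)) 2 P) ∧
      (∀ᵐ u ∂lam, ∀ᵐ v ∂lam,
        ∫ ω, X (ω, u) * X (ω, v) ∂P
          = (∫ ω, X (ω, u) ∂P) * (∫ ω, X (ω, v) ∂P)))
    ↔
    (∀ A : Set I, MeasurableSet A → 0 < lam A →
      ∀ᵐ ω ∂P,
        ∫ u in A, X (ω, u) ∂lam = ∫ u in A, (∫ ω', X (ω', u) ∂P) ∂lam) :=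
  exact_law_of_large_numbers_general (mΩ := mΩ) (mI := mI) P lam W Q hFub X hX2
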